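/- arXiv:2303.17447 — 2 statements merged into one kernel-verified Lean document; each statement's English description precedes it below -/
import Mathlib

section
/- Let μ : Sym^δ ∘ Sym^δ → Sym^δ denote the monad multiplication of the free δ-ring monad on free ℤ_(p)-modules. Then μ carries the subfunctor Sym^{δ,≤n} ∘ Sym^{δ,≤m} into Sym^{δ,≤nm}; i.e., if f is an element of δ-degree ≤ n in the free δ-ring on the set of monic monomials of δ-degree ≤ m in Sym^δ(M), then its image under μ has δ-degree ≤ nm in Sym^δ(M). -/
/-!
The δ-degree is the weighted degree for the weights `x_{s,i} ↦ p ^ i`, and `δ` multiplies it by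
`p`, at least on polynomials with integer coefficients (the axioms do not control `δ` on the other
constants of `ℤ_p`). Indeed, the integral polynomials `f` of weight `≤ d` such that `δ f` is
integral of weight `≤ p * d` form a graded family: it is closed under sums because
`δ (x + y) - δ x - δ y` is a form of degree `p` in `x, y`, and under products because
`δ (x * y) = x ^ p * δ y + y ^ p * δ x + p * δ x * δ y`. As it contains the integers and the
variables, it contains every integral polynomial. So `δ^i` of a monic monomial of weight `≤ m`
has weight `≤ p ^ i * m`, and substituting these into a polynomial of weight `≤ n` gives weight
`≤ n * m`.
-/

open MvPolynomial

/-- The integral polynomial `(X₀^p + X₁^p - (X₀+X₁)^p)/p`, written explicitly using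
binomial coefficients (each `p.choose k` for `0 < k < p` is divisible by `p`). -/
noncomputable def deltaAddPoly (p : ℕ) : MvPolynomial (Fin 2) ℤ :=
  - ∑ k ∈ Finset.Ioo 0 p, MvPolynomial.C ((p.choose k / p : ℕ) : ℤ) * X 0 ^ k * X 1 ^ (p - k)

/-- A δ-ring structure (for the prime `p`) on a commutative ring `A`. -/
structure DeltaRing (p : ℕ) (A : Type*) [CommRing A] where
  δ : A → A
  delta_zero : δ 0 = 0
  delta_one : δ 1 = 0
  delta_mul : ∀ x y : A, δ (x * y) = x ^ p * δ y + y ^ p * δ x + (p : A) * δ x * δ y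
  delta_add : ∀ x y : A, δ (x + y) = δ x + δ y + MvPolynomial.aeval ![x, y] (deltaAddPoly p)


/-- The set of monic monomials of δ-degree `≤ m` in the free δ-ring
`ℤ_(p)[x_{s,i} : s ∈ S, i ∈ ℕ]`, where `x_{s,i}` has δ-degree (weight) `p^i`. -/
def MonicMonomialLE (p : ℕ) [Fact p.Prime] (S : Type*) (m : ℕ) : Type _ :=
  {f : MvPolynomial (S × ℕ) (PadicInt p) //
    (∃ d : (S × ℕ) →₀ ℕ, f = MvPolynomial.monomial d 1) ∧
    MvPolynomial.weightedTotalDegree (fun v : S × ℕ => p ^ v.2) f ≤ m}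

open Finsupp

theorem SetLike.finsuppProd_pow_mem_graded {ι κ R S : Type*} [SetLike S R] [CommMonoid R]
    [AddCommMonoid ι] (A : ι → S) [SetLike.GradedMonoid A] {i : κ → ι} {g : κ → R}
    (hg : ∀ k, g k ∈ A (i k)) (e : κ →₀ ℕ) :
    e.prod (fun k n => g k ^ n) ∈ A (weight i e) := by
  rw [weight_apply, Finsupp.sum]
  exact SetLike.prod_pow_mem_graded A i g e fun k _ => hg k

namespace MvPolynomial

variable {σ R : Type*}

section WeightedDegreeLE

variable (R) [CommSemiring R] (w : σ → ℕ)

noncomputable def weightedDegreeLE (d : ℕ) : Submodule R (MvPolynomial σ R) :=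
  restrictSupport R {e | weight w e ≤ d}

variable {R w}

theorem mem_weightedDegreeLE {d : ℕ} {f : MvPolynomial σ R} :
    f ∈ weightedDegreeLE R w d ↔ weightedTotalDegree w f ≤ d := by
  rw [weightedTotalDegree, Finset.sup_le_iff]
  rfl

theorem weightedDegreeLE_mono : Monotone (weightedDegreeLE R w) :=
  fun _ _ h => restrictSupport_mono R fun _ he => le_trans he h

instance : SetLike.GradedMonoid (weightedDegreeLE R w) where
  one_mem := by
    rw [one_def]
    exact (monomial_mem_restrictSupport R).2 (Or.inl (by simp))
  mul_mem a b f g hf hg := by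
    refine restrictSupport_mono R ?_
      ((restrictSupport_add R _ _).ge (Submodule.mul_mem_mul hf hg))
    rintro _ ⟨e, he, e', he', rfl⟩
    exact (map_add (weight w) e e').trans_le (add_le_add he he')

theorem aeval_mem_weightedDegreeLE {τ : Type*} {w' : τ → ℕ} {F : τ → MvPolynomial σ R}
    {m n : ℕ} (hF : ∀ v, F v ∈ weightedDegreeLE R w (w' v * m))
    {g : MvPolynomial τ R} (hg : g ∈ weightedDegreeLE R w' n) :
    aeval F g ∈ weightedDegreeLE R w (n * m) := by
  rw [g.as_sum, map_sum]
  refine Submodule.sum_mem _ fun e he => ?_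
  have hweight : weight (fun v => w' v * m) e = weight w' e * m := by
    simp only [weight_apply, Finsupp.sum, smul_eq_mul, Finset.sum_mul, mul_assoc]
  rw [aeval_monomial, ← zero_add (n * m)]
  refine SetLike.mul_mem_graded (SetLike.algebraMap_mem_graded _ _)
    (weightedDegreeLE_mono ?_ (SetLike.finsuppProd_pow_mem_graded _ hF e))
  rw [hweight]
  exact Nat.mul_le_mul_right m (hg he)

end WeightedDegreeLE

section IntWeightedDegreeLE

variable (R) [CommRing R] (w : σ → ℕ)

noncomputable def intWeightedDegreeLE (d : ℕ) : AddSubgroup (MvPolynomial σ R) :=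
  (weightedDegreeLE ℤ w d).toAddSubgroup.map (map (Int.castRingHom R)).toAddMonoidHom

variable {R w}

theorem intWeightedDegreeLE_mono : Monotone (intWeightedDegreeLE R w) :=
  fun _ _ h => AddSubgroup.map_mono (weightedDegreeLE_mono h)

instance : SetLike.GradedMonoid (intWeightedDegreeLE R w) where
  one_mem :=
    ⟨1, SetLike.one_mem_graded (weightedDegreeLE ℤ w), map_one (map (Int.castRingHom R))⟩
  mul_mem := by
    rintro a b _ _ ⟨f, hf, rfl⟩ ⟨g, hg, rfl⟩
    exact ⟨f * g, SetLike.mul_mem_graded (A := weightedDegreeLE ℤ w) hf hg,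
      map_mul (map (Int.castRingHom R)) f g⟩

theorem intWeightedDegreeLE_subset_weightedDegreeLE (d : ℕ) :
    (intWeightedDegreeLE R w d : Set (MvPolynomial σ R)) ⊆ weightedDegreeLE R w d := by
  rintro _ ⟨f, hf, rfl⟩
  exact (Finset.coe_subset.2 (support_map_subset _ f)).trans hf

theorem X_mem_intWeightedDegreeLE (v : σ) : X v ∈ intWeightedDegreeLE R w (w v) :=
  ⟨X v, (monomial_mem_restrictSupport ℤ).2 (Or.inl (by simp [weight_apply])), map_X _ v⟩

theorem monomial_one_mem_intWeightedDegreeLE (e : σ →₀ ℕ) :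
    monomial e 1 ∈ intWeightedDegreeLE R w (weight w e) :=
  ⟨monomial e 1, (monomial_mem_restrictSupport ℤ).2 (.inl (le_refl (weight w e))), by simp⟩

theorem mem_of_mem_intWeightedDegreeLE (A : ℕ → AddSubmonoid (MvPolynomial σ R))
    [SetLike.GradedMonoid A] (hA : Monotone A) (hC : ∀ c : ℤ, (c : MvPolynomial σ R) ∈ A 0)
    (hX : ∀ v, X v ∈ A (w v)) {d : ℕ} {f : MvPolynomial σ R}
    (hf : f ∈ intWeightedDegreeLE R w d) : f ∈ A d := by
  obtain ⟨q, hq, rfl⟩ := hf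
  rw [q.as_sum, map_sum]
  refine sum_mem fun e he => ?_
  have hmonomial : map (Int.castRingHom R) (monomial e (coeff e q))
      = ((coeff e q : ℤ) : MvPolynomial σ R) * e.prod fun v n => X v ^ n := by
    rw [map_monomial, ← monic_monomial_eq, ← map_intCast (C : R →+* MvPolynomial σ R),
      C_mul_monomial, mul_one, eq_intCast]
  change map (Int.castRingHom R) (monomial e (coeff e q)) ∈ A d
  rw [hmonomial, ← zero_add d]
  exact SetLike.mul_mem_graded (hC _) (hA (hq he) (SetLike.finsuppProd_pow_mem_graded A hX e))

end IntWeightedDegreeLE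

end MvPolynomial

theorem aeval_deltaAddPoly_mem_graded {A S : Type*} [CommRing A] [SetLike S A]
    [AddSubgroupClass S A] (F : ℕ → S) [SetLike.GradedMonoid F] (p : ℕ) {d : ℕ} {x y : A}
    (hx : x ∈ F d) (hy : y ∈ F d) : aeval ![x, y] (deltaAddPoly p) ∈ F (p * d) := by
  simp only [deltaAddPoly, map_neg, map_sum, map_mul, map_pow, aeval_X, eq_intCast,
    map_intCast]
  refine neg_mem (sum_mem fun k hk => ?_)
  have hdeg : p * d = 0 + k • d + (p - k) • d := by
    rw [zero_add, ← add_smul, Nat.add_sub_cancel' (Finset.mem_Ioo.1 hk).2.le, smul_eq_mul]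
  rw [hdeg]
  exact SetLike.mul_mem_graded (SetLike.mul_mem_graded (SetLike.intCast_mem_graded F _)
    (SetLike.pow_mem_graded k hx)) (SetLike.pow_mem_graded _ hy)

namespace DeltaRing

variable {p : ℕ}

section IntCast

variable {A : Type*} [CommRing A] (D : DeltaRing p A)

theorem delta_intCast_add_one (c : ℤ) :
    D.δ ((c + 1 : ℤ) : A) = D.δ c + ((aeval ![c, 1] (deltaAddPoly p) : ℤ) : A) := by
  have hcast : ![(c : A), 1] = algebraMap ℤ A ∘ ![c, 1] := by
    ext i
    fin_cases i <;> simp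
  rw [Int.cast_add, Int.cast_one, D.delta_add, D.delta_one, add_zero, hcast,
    aeval_algebraMap_apply, algebraMap_int_eq, eq_intCast]

theorem exists_delta_intCast (c : ℤ) : ∃ c' : ℤ, D.δ (c : A) = c' := by
  induction c using Int.induction_on with
  | zero => exact ⟨0, by simpa using D.delta_zero⟩
  | succ k ih =>
    obtain ⟨c', hc'⟩ := ih
    exact ⟨c' + aeval ![(k : ℤ), 1] (deltaAddPoly p), by
      rw [D.delta_intCast_add_one, hc', Int.cast_add]⟩
  | pred k ih =>
    obtain ⟨c', hc'⟩ := ih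
    refine ⟨c' - aeval ![-(k : ℤ) - 1, 1] (deltaAddPoly p), ?_⟩
    have h := D.delta_intCast_add_one (-k - 1)
    rw [sub_add_cancel, hc'] at h
    rw [Int.cast_sub c', h, add_sub_cancel_right]

end IntCast

section MvPolynomial

variable {σ R : Type*} [CommRing R] (D : DeltaRing p (MvPolynomial σ R)) (w : σ → ℕ)

def deltaWeightedDegreeLE (d : ℕ) : AddSubmonoid (MvPolynomial σ R) where
  carrier := {f | f ∈ intWeightedDegreeLE R w d ∧ D.δ f ∈ intWeightedDegreeLE R w (p * d)}
  zero_mem' := ⟨zero_mem _, by rw [D.delta_zero]; exact zero_mem _⟩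
  add_mem' := by
    rintro f g ⟨hf, hδf⟩ ⟨hg, hδg⟩
    refine ⟨add_mem hf hg, ?_⟩
    rw [D.delta_add]
    exact add_mem (add_mem hδf hδg) (aeval_deltaAddPoly_mem_graded _ p hf hg)

instance : SetLike.GradedMonoid (D.deltaWeightedDegreeLE w) where
  one_mem := ⟨SetLike.one_mem_graded _, by rw [D.delta_one]; exact zero_mem _⟩
  mul_mem := by
    rintro a b f g ⟨hf, hδf⟩ ⟨hg, hδg⟩
    refine ⟨SetLike.mul_mem_graded hf hg, ?_⟩
    have hfp := SetLike.pow_mem_graded p hf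
    have hgp := SetLike.pow_mem_graded p hg
    have hp := SetLike.natCast_mem_graded (intWeightedDegreeLE R w) p
    rw [smul_eq_mul] at hfp hgp
    have h₁ := SetLike.mul_mem_graded hfp hδg
    have h₂ := SetLike.mul_mem_graded hgp hδf
    have h₃ := SetLike.mul_mem_graded (SetLike.mul_mem_graded hp hδf) hδg
    rw [add_comm] at h₂
    rw [zero_add] at h₃
    rw [D.delta_mul, mul_add]
    exact add_mem (add_mem h₁ h₂) h₃

theorem deltaWeightedDegreeLE_mono : Monotone (D.deltaWeightedDegreeLE w) :=
  fun _ _ h _ hf => ⟨intWeightedDegreeLE_mono h hf.1,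
    intWeightedDegreeLE_mono (Nat.mul_le_mul_left p h) hf.2⟩

theorem intCast_mem_deltaWeightedDegreeLE (c : ℤ) :
    (c : MvPolynomial σ R) ∈ D.deltaWeightedDegreeLE w 0 := by
  obtain ⟨c', hc'⟩ := D.exists_delta_intCast c
  refine ⟨SetLike.intCast_mem_graded _ c, ?_⟩
  rw [hc', mul_zero]
  exact SetLike.intCast_mem_graded _ c'

variable {D w}

theorem delta_mem_intWeightedDegreeLE (hX : ∀ v, D.δ (X v) ∈ intWeightedDegreeLE R w (p * w v))
    {d : ℕ} {f : MvPolynomial σ R} (hf : f ∈ intWeightedDegreeLE R w d) :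
    D.δ f ∈ intWeightedDegreeLE R w (p * d) :=
  (mem_of_mem_intWeightedDegreeLE _ (D.deltaWeightedDegreeLE_mono w)
    (D.intCast_mem_deltaWeightedDegreeLE w) (fun v => ⟨X_mem_intWeightedDegreeLE v, hX v⟩) hf).2

theorem iterate_delta_mem_intWeightedDegreeLE
    (hX : ∀ v, D.δ (X v) ∈ intWeightedDegreeLE R w (p * w v))
    {d : ℕ} {f : MvPolynomial σ R} (hf : f ∈ intWeightedDegreeLE R w d) (i : ℕ) :
    D.δ^[i] f ∈ intWeightedDegreeLE R w (p ^ i * d) := by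
  induction i with
  | zero => simpa using hf
  | succ i ih =>
    rw [Function.iterate_succ_apply', pow_succ', mul_assoc]
    exact delta_mem_intWeightedDegreeLE hX ih

end MvPolynomial

end DeltaRing

/-- the monad multiplication `μ : Sym^δ ∘ Sym^δ → Sym^δ` (sending the
generator `f_{s,i}` corresponding to a monic monomial `f_s` of δ-degree `≤ m` to
`δ^i(f_s)` and evaluating) carries `Sym^{δ,≤n} ∘ Sym^{δ,≤m}` into `Sym^{δ,≤nm}`. -/
theorem mu_deltaDegree_le {p : ℕ} [Fact p.Prime] {S : Type*}
    (D : DeltaRing p (MvPolynomial (S × ℕ) (PadicInt p)))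
    (hD : ∀ (s : S) (i : ℕ), D.δ (MvPolynomial.X (s, i)) = MvPolynomial.X (s, i + 1))
    (n m : ℕ)
    (g : MvPolynomial (MonicMonomialLE p S m × ℕ) (PadicInt p))
    (hg : MvPolynomial.weightedTotalDegree (fun v => p ^ v.2) g ≤ n) :
    MvPolynomial.weightedTotalDegree (fun v : S × ℕ => p ^ v.2)
      (MvPolynomial.aeval (fun v : MonicMonomialLE p S m × ℕ => D.δ^[v.2] v.1.1) g)
        ≤ n * m := by
  have hX : ∀ v : S × ℕ,
      D.δ (X v) ∈ intWeightedDegreeLE (PadicInt p) (fun v => p ^ v.2) (p * p ^ v.2) := by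
    rintro ⟨s, i⟩
    rw [hD, ← pow_succ']
    exact X_mem_intWeightedDegreeLE (s, i + 1)
  have hgen : ∀ v : MonicMonomialLE p S m × ℕ,
      D.δ^[v.2] v.1.1 ∈ weightedDegreeLE (PadicInt p) (fun v => p ^ v.2) (p ^ v.2 * m) := by
    rintro ⟨⟨_, ⟨e, rfl⟩, he⟩, j⟩
    have hweight : Finsupp.weight (fun v : S × ℕ => p ^ v.2) e ≤ m :=
      (le_weightedTotalDegree _ (by classical simp [MvPolynomial.mem_support_iff])).trans he
    exact intWeightedDegreeLE_subset_weightedDegreeLE _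
      (DeltaRing.iterate_delta_mem_intWeightedDegreeLE hX
        (intWeightedDegreeLE_mono hweight (monomial_one_mem_intWeightedDegreeLE e)) j)
  exact mem_weightedDegreeLE.1 (aeval_mem_weightedDegreeLE hgen (mem_weightedDegreeLE.2 hg))
end

section
/- Let (A, I) → (B, J) be a map of prisms. Then the natural map I ⊗_A B → J is an isomorphism (rigidity of maps of prisms). In particular, if I = (d) is principal with d a distinguished element, then J is generated by the image of d. -/
open MvPolynomial

open scoped TensorProduct

/-- Classical (discrete) notion of a prism `(A, I)`: `A` is a δ-ring, `I` is an
invertible ideal (here: principal, generated by a nonzerodivisor), `A` is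
(p, I)-adically complete, and `p ∈ I + φ(I)A`. -/
def IsPrism (p : ℕ) {A : Type*} [CommRing A] (D : DeltaRing p A) (I : Ideal A) : Prop :=
  (∃ d : A, d ∈ nonZeroDivisors A ∧ I = Ideal.span {d}) ∧
  IsAdicComplete (I ⊔ Ideal.span {(p : A)}) A ∧
  (p : A) ∈ I ⊔ Ideal.span ((fun x : A => x ^ p + (p : A) * D.δ x) '' (I : Set A))

/-!
In a prism `(A, (d))` the generator `d` is distinguished, i.e. `δ d` is a unit (BS Lemma 2.24):
apply `δ` to the relation `p w = c d` coming from `p ∈ (d, φ d)` and reduce modulo `(p, d, δ d)`,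
using `δ p ≡ 1 (mod p)`. For a map of prisms, write the image of `d` as `e u` with `J = (e)`.
Since `δ` commutes with the map, `δ (e u) = e^p δ u + u^p δ e + p δ e δ u` is a unit, and as `p`
and `e` lie in the Jacobson radical (by completeness), `u^p` and hence `u` is a unit. Thus `J` is
generated by the image of `d`, which is a nonzerodivisor, so `I ⊗_A B ≅ B` maps isomorphically
onto `J`.
-/

namespace DeltaRing

variable {p : ℕ} {A : Type*} [CommRing A]

theorem natCast_mul_aeval_deltaAddPoly [Fact p.Prime] (x y : A) :
    (p : A) * aeval ![x, y] (deltaAddPoly p) = x ^ p + y ^ p - (x + y) ^ p := by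
  have hp : p.Prime := Fact.out
  have hsum : (p : A) * ∑ k ∈ Finset.Ioo 0 p, ((p.choose k / p : ℕ) : A) * x ^ k * y ^ (p - k)
      = ∑ k ∈ Finset.Ioo 0 p, x ^ k * y ^ (p - k) * (p.choose k : A) := by
    rw [Finset.mul_sum]
    refine Finset.sum_congr rfl fun k hk => ?_
    obtain ⟨hk0, hkp⟩ := Finset.mem_Ioo.mp hk
    obtain ⟨m, hm⟩ := hp.dvd_choose_self hk0.ne' hkp
    rw [hm, Nat.mul_div_cancel_left _ hp.pos]
    push_cast
    ring
  have hsplit : Finset.range (p + 1) = insert 0 (insert p (Finset.Ioo 0 p)) := by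
    ext k
    simp only [Finset.mem_range, Finset.mem_insert, Finset.mem_Ioo]
    omega
  have hadd := add_pow x y p
  rw [hsplit, Finset.sum_insert (by simp [hp.ne_zero.symm]), Finset.sum_insert (by simp)] at hadd
  simp only [deltaAddPoly, map_neg, map_sum, map_mul, map_pow, aeval_X, Matrix.cons_val_zero,
    Matrix.cons_val_one, map_natCast, mul_neg, hsum]
  simp only [pow_zero, Nat.sub_zero, Nat.sub_self, Nat.choose_self, Nat.choose_zero_right,
    Nat.cast_one, one_mul, mul_one] at hadd
  linear_combination hadd

theorem exists_delta_natCast_eq_intCast [Fact p.Prime] (D : DeltaRing p A) (n : ℕ) :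
    ∃ z : ℤ, (p : ℤ) * z = n - n ^ p ∧ D.δ n = z := by
  induction n with
  | zero => exact ⟨0, by simp [(Fact.out : p.Prime).ne_zero], by simpa using D.delta_zero⟩
  | succ n ih =>
    obtain ⟨z, hpz, hz⟩ := ih
    set e := aeval ![(n : ℤ), 1] (deltaAddPoly p)
    refine ⟨z + e, ?_, ?_⟩
    · have := natCast_mul_aeval_deltaAddPoly (p := p) (n : ℤ) 1
      push_cast
      linear_combination hpz + this
    · have he : aeval ![(n : A), 1] (deltaAddPoly p) = e := by
        rw [← eq_intCast (Algebra.ofId ℤ A), comp_aeval_apply]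
        congr 1
        ext i
        fin_cases i <;> simp
      rw [Nat.cast_succ, D.delta_add, D.delta_one, hz, he]
      push_cast
      ring

theorem delta_natCast_self [Fact p.Prime] (D : DeltaRing p A) :
    D.δ (p : A) = 1 - (p : A) ^ (p - 1) := by
  have hp : p.Prime := Fact.out
  obtain ⟨z, hpz, hz⟩ := D.exists_delta_natCast_eq_intCast p
  have hpow : (p : ℤ) ^ p = p * p ^ (p - 1) := by rw [← pow_succ', Nat.sub_add_cancel hp.pos]
  have : z = 1 - (p : ℤ) ^ (p - 1) :=
    mul_left_cancel₀ (Nat.cast_ne_zero.mpr hp.ne_zero) (by linear_combination hpz - hpow)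
  rw [hz, this]
  push_cast
  rfl

def frobenius (D : DeltaRing p A) (x : A) : A :=
  x ^ p + p * D.δ x

theorem frobenius_mul (D : DeltaRing p A) (x y : A) :
    D.frobenius (x * y) = D.frobenius x * D.frobenius y := by
  simp only [frobenius, D.delta_mul]
  ring

theorem isUnit_of_mul_eq_one_sub {x y j : A} (hj : j ∈ Ideal.jacobson ⊥) (h : x * y = 1 - j) :
    IsUnit x :=
  isUnit_of_mul_isUnit_left <| Ideal.isUnit_of_sub_one_mem_jacobson_bot _ <| by
    rw [h, sub_sub_cancel_left]
    exact neg_mem hj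

theorem isUnit_delta_of_mem_span_frobenius [Fact p.Prime] (D : DeltaRing p A) {d : A}
    (hp : (p : A) ∈ Ideal.jacobson ⊥) (hd : d ∈ Ideal.jacobson ⊥)
    (h : (p : A) ∈ Ideal.span {d, D.frobenius d}) : IsUnit (D.δ d) := by
  have two_le : 2 ≤ p := (Fact.out : p.Prime).two_le
  obtain ⟨a, b, hab⟩ := Ideal.mem_span_pair.mp h
  set w := 1 - b * D.δ d
  set c := a + b * d ^ (p - 1)
  have hdp : d ^ p = d ^ (p - 1) * d := by rw [← pow_succ, Nat.sub_add_cancel (by omega)]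
  have hp1 : (p : A) ^ (p - 1) = p * p ^ (p - 2) := by
    rw [← pow_succ', show p - 2 + 1 = p - 1 by omega]
  have hpp : (p : A) ^ p = p * p ^ (p - 1) := by rw [← pow_succ', Nat.sub_add_cancel (by omega)]
  have hpw : (p : A) * w = c * d := by
    simp only [frobenius] at hab
    linear_combination -hab + b * hdp
  have key := congrArg D.δ hpw
  rw [D.delta_mul, D.delta_mul, D.delta_natCast_self] at key
  -- `w ≡ 1` modulo `δ d`, so `key` reads `1 ≡ 0` modulo `(p, d, δ d)`
  obtain ⟨s, hs⟩ : D.δ d ∣ w ^ p - 1 := by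
    have := sub_dvd_pow_sub_pow w 1 p
    rw [one_pow, show w - 1 = D.δ d * -b by ring] at this
    exact (dvd_mul_right _ _).trans this
  refine isUnit_of_mul_eq_one_sub (y := c ^ p + p * D.δ c - s)
    (j := p * (w ^ p * p ^ (p - 2) - D.δ w) + d * (d ^ (p - 1) * D.δ c))
    (add_mem (Ideal.mul_mem_right _ _ hp) (Ideal.mul_mem_right _ _ hd)) ?_
  linear_combination -key + hs + D.δ w * hpp - w ^ p * hp1 - D.δ c * hdp

theorem isUnit_of_isUnit_delta_mul (D : DeltaRing p A) (hp0 : p ≠ 0) {e u : A}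
    (hp : (p : A) ∈ Ideal.jacobson ⊥) (he : e ∈ Ideal.jacobson ⊥) (h : IsUnit (D.δ (e * u))) :
    IsUnit u := by
  obtain ⟨v, hv⟩ := h.exists_right_inv
  have hep : e ^ p = e * e ^ (p - 1) := by rw [← pow_succ', Nat.sub_add_cancel (by omega)]
  rw [D.delta_mul] at hv
  refine (isUnit_pow_iff hp0).mp <| isUnit_of_mul_eq_one_sub (y := D.δ e * v)
    (j := e * (e ^ (p - 1) * D.δ u * v) + p * (D.δ e * D.δ u * v))
    (add_mem (Ideal.mul_mem_right _ _ he) (Ideal.mul_mem_right _ _ hp)) ?_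
  linear_combination hv - D.δ u * v * hep

end DeltaRing

namespace IsPrism

variable {p : ℕ} {A : Type*} [CommRing A] {D : DeltaRing p A} {I : Ideal A}

theorem sup_span_natCast_le_jacobson_bot (h : IsPrism p D I) :
    I ⊔ Ideal.span {(p : A)} ≤ Ideal.jacobson ⊥ :=
  haveI := h.2.1
  IsAdicComplete.le_jacobson_bot _

theorem natCast_mem_jacobson_bot (h : IsPrism p D I) : (p : A) ∈ Ideal.jacobson ⊥ :=
  h.sup_span_natCast_le_jacobson_bot (Ideal.mem_sup_right (Ideal.mem_span_singleton_self _))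

theorem mem_jacobson_bot (h : IsPrism p D I) {x : A} (hx : x ∈ I) : x ∈ Ideal.jacobson ⊥ :=
  h.sup_span_natCast_le_jacobson_bot (Ideal.mem_sup_left hx)

theorem natCast_mem_span_frobenius (h : IsPrism p D I) {d : A} (hI : I = Ideal.span {d}) :
    (p : A) ∈ Ideal.span {d, D.frobenius d} := by
  refine (sup_le ?_ ?_ : _ ≤ Ideal.span {d, D.frobenius d}) h.2.2
  · rw [hI]
    exact Ideal.span_mono (by simp)
  · rw [Ideal.span_le]
    rintro _ ⟨x, hx, rfl⟩
    obtain ⟨r, rfl⟩ := Ideal.mem_span_singleton'.mp (hI ▸ hx)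
    change D.frobenius (r * d) ∈ _
    rw [D.frobenius_mul]
    exact Ideal.mul_mem_left _ _ (Ideal.subset_span (by simp))

theorem isUnit_delta [Fact p.Prime] (h : IsPrism p D I) {d : A} (hI : I = Ideal.span {d}) :
    IsUnit (D.δ d) :=
  D.isUnit_delta_of_mem_span_frobenius h.natCast_mem_jacobson_bot
    (h.mem_jacobson_bot (hI ▸ Ideal.mem_span_singleton_self d)) (h.natCast_mem_span_frobenius hI)

end IsPrism

namespace Ideal

variable {A : Type*} [CommRing A]

theorem exists_generator_tmul_eq {M : Type*} [AddCommGroup M] [Module A M] (d : A)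
    (t : span {d} ⊗[A] M) : ∃ m : M, (⟨d, mem_span_singleton_self d⟩ : span {d}) ⊗ₜ m = t := by
  induction t using TensorProduct.induction_on with
  | zero => exact ⟨0, TensorProduct.tmul_zero _ _⟩
  | tmul x m =>
    obtain ⟨r, hr⟩ := mem_span_singleton'.mp x.2
    refine ⟨r • m, ?_⟩
    rw [← TensorProduct.smul_tmul]
    congr 1
    exact Subtype.ext hr
  | add t₁ t₂ h₁ h₂ =>
    obtain ⟨m₁, rfl⟩ := h₁
    obtain ⟨m₂, rfl⟩ := h₂
    exact ⟨m₁ + m₂, TensorProduct.tmul_add _ _ _⟩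

theorem injective_and_range_eq_of_tmul_eq_mul {B : Type*} [CommRing B] [Algebra A B] {d : A}
    (hd : algebraMap A B d ∈ nonZeroDivisors B) (g : span {d} ⊗[A] B →ₗ[A] B)
    (hg : ∀ (x : span {d}) (b : B), g (x ⊗ₜ b) = algebraMap A B x * b) :
    Function.Injective g ∧ LinearMap.range g = (span {algebraMap A B d}).restrictScalars A := by
  have hgd : ∀ b, g (⟨d, mem_span_singleton_self d⟩ ⊗ₜ b) = algebraMap A B d * b := hg _
  refine ⟨fun t₁ t₂ ht => ?_, ?_⟩
  · obtain ⟨b₁, rfl⟩ := exists_generator_tmul_eq d t₁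
    obtain ⟨b₂, rfl⟩ := exists_generator_tmul_eq d t₂
    rw [hgd, hgd] at ht
    rw [(isRegular_iff_mem_nonZeroDivisors.mpr hd).left ht]
  · ext b
    simp only [LinearMap.mem_range, Submodule.restrictScalars_mem, mem_span_singleton']
    constructor
    · rintro ⟨t, rfl⟩
      obtain ⟨c, rfl⟩ := exists_generator_tmul_eq d t
      exact ⟨c, by rw [hgd, mul_comm]⟩
    · rintro ⟨c, rfl⟩
      exact ⟨_, (hgd c).trans (mul_comm _ _)⟩

end Ideal

/-- rigidity of maps of prisms: for a map of prisms
`(A, I) → (B, J)`, the natural map `I ⊗_A B → B` is injective with image `J`,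
i.e. `I ⊗_A B ≅ J`.  In particular, if `I = (d)` with `d` distinguished, then
`J` is generated by the image of `d`. -/
theorem prism_rigidity {p : ℕ} [Fact p.Prime] {A B : Type*} [CommRing A] [CommRing B]
    [Algebra A B] (DA : DeltaRing p A) (DB : DeltaRing p B)
    (I : Ideal A) (J : Ideal B)
    (hA : IsPrism p DA I) (hB : IsPrism p DB J)
    (hδ : ∀ a : A, algebraMap A B (DA.δ a) = DB.δ (algebraMap A B a))
    (hIJ : I.map (algebraMap A B) ≤ J) :
    (∀ g : I ⊗[A] B →ₗ[A] B,
      (∀ (x : I) (b : B), g (x ⊗ₜ[A] b) = algebraMap A B x * b) →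
      Function.Injective g ∧ LinearMap.range g = J.restrictScalars A) ∧
    (∀ d : A, IsUnit (DA.δ d) → I = Ideal.span {d} →
      J = Ideal.span {algebraMap A B d}) := by
  obtain ⟨d, -, rfl⟩ := hA.1
  obtain ⟨e, he, rfl⟩ := hB.1
  obtain ⟨u, hu⟩ : e ∣ algebraMap A B d :=
    Ideal.mem_span_singleton.mp (hIJ (Ideal.mem_map_of_mem _ (Ideal.mem_span_singleton_self d)))
  have hu_unit : IsUnit u := DB.isUnit_of_isUnit_delta_mul (Fact.out : p.Prime).ne_zero
    hB.natCast_mem_jacobson_bot (hB.mem_jacobson_bot (Ideal.mem_span_singleton_self e))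
    (by rw [← hu, ← hδ]; exact (hA.isUnit_delta rfl).map _)
  have hJ : Ideal.span {e} = Ideal.span {algebraMap A B d} := by
    rw [hu, Ideal.span_singleton_mul_right_unit hu_unit]
  have hd_reg : algebraMap A B d ∈ nonZeroDivisors B :=
    hu ▸ mul_mem_nonZeroDivisors.mpr ⟨he, hu_unit.mem_nonZeroDivisors⟩
  refine ⟨fun g hg => hJ ▸ Ideal.injective_and_range_eq_of_tmul_eq_mul hd_reg g hg,
    fun d' _ hd' => ?_⟩
  rw [hJ, ← Set.image_singleton, ← Ideal.map_span, hd', Ideal.map_span, Set.image_singleton]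
end
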